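/- For fixed b > 0, the first-order Marcum Q-function a ↦ Q₁(a, b) = ∫_b^∞ x exp(−(x²+a²)/2) I₀(a x) dx is monotonically non-decreasing in a ≥ 0. -/

import Mathlib

open Real MeasureTheory Set

/-- Modified Bessel function of the first kind of nonnegative integer order `ν`,
defined by its power series. -/
noncomputable def besselI (ν : ℕ) (x : ℝ) : ℝ :=
  ∑' k : ℕ, (x / 2) ^ (2 * k + ν) / ((Nat.factorial k : ℝ) * (Nat.factorial (k + ν) : ℝ))

/-- First-order Marcum Q-function `Q₁(a,b) = ∫_b^∞ x e^{-(x²+a²)/2} I₀(ax) dx`. -/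
noncomputable def marcumQ1 (a b : ℝ) : ℝ :=
  ∫ x in Ici b, x * Real.exp (-(x ^ 2 + a ^ 2) / 2) * besselI 0 (a * x)

/-!
Expanding `I₀` as a power series gives `e^{-(x²+a²)/2} I₀(ax) = ∑ₖ πₖ(a²/2) πₖ(x²/2)`, with the
Poisson weights `πₖ(t) = e^{-t} tᵏ/k!`, and the substitution `t = x²/2` turns
`∫_b^∞ x πₖ(x²/2) dx` into `P(N_{b²/2} ≤ k)`, where `N_t` is Poisson with mean `t`. Hence
`Q₁(a,b) = ∑ₖ πₖ(a²/2) P(N_{b²/2} ≤ k)`, and exchanging the two summations gives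
`Q₁(a,b) = ∑ⱼ πⱼ(b²/2) P(N_{a²/2} ≥ j)`. Each `P(N_t ≥ j)` increases with `t`, because
`d/dt P(N_t ≤ j) = -πⱼ(t)`.
-/

open Filter Topology

noncomputable def poissonWeight (t : ℝ) (k : ℕ) : ℝ := exp (-t) * t ^ k / k.factorial

/-- `poissonCDF n t = P(N < n)`, not `P(N ≤ n)`, for `N` Poisson with mean `t`. -/
noncomputable def poissonCDF (n : ℕ) (t : ℝ) : ℝ := ∑ k ∈ Finset.range n, poissonWeight t k

section Poisson

variable {t : ℝ}

lemma poissonWeight_nonneg (ht : 0 ≤ t) (k : ℕ) : 0 ≤ poissonWeight t k := by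
  unfold poissonWeight; positivity

lemma hasSum_poissonWeight (t : ℝ) : HasSum (poissonWeight t) 1 := by
  have h := (NormedSpace.expSeries_div_hasSum_exp t).mul_left (exp (-t))
  rw [← Real.exp_eq_exp_ℝ, ← exp_add, neg_add_cancel, exp_zero] at h
  have hw : poissonWeight t = fun k => exp (-t) * (t ^ k / k.factorial) :=
    funext fun k => mul_div_assoc _ _ _
  rw [hw]
  exact h

lemma summable_poissonWeight (t : ℝ) : Summable (poissonWeight t) :=
  (hasSum_poissonWeight t).summable

lemma poissonCDF_nonneg (ht : 0 ≤ t) (n : ℕ) : 0 ≤ poissonCDF n t :=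
  Finset.sum_nonneg fun k _ => poissonWeight_nonneg ht k

lemma poissonCDF_le_one (ht : 0 ≤ t) (n : ℕ) : poissonCDF n t ≤ 1 :=
  (hasSum_poissonWeight t).tsum_eq ▸
    (summable_poissonWeight t).sum_le_tsum _ (fun k _ => poissonWeight_nonneg ht k)

lemma tsum_poissonWeight_nat_add (t : ℝ) (n : ℕ) :
    ∑' m, poissonWeight t (m + n) = 1 - poissonCDF n t := by
  rw [← (hasSum_poissonWeight t).tsum_eq, ← (summable_poissonWeight t).sum_add_tsum_nat_add n,
    poissonCDF, add_sub_cancel_left]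

lemma hasDerivAt_poissonWeight_succ (t : ℝ) (k : ℕ) :
    HasDerivAt (poissonWeight · (k + 1)) (poissonWeight t k - poissonWeight t (k + 1)) t := by
  have h : HasDerivAt (poissonWeight · (k + 1)) _ t :=
    (((hasDerivAt_neg t).exp).mul (hasDerivAt_pow (k + 1) t)).div_const _
  refine h.congr_deriv ?_
  simp only [poissonWeight, Nat.factorial_succ, Nat.cast_mul, Nat.cast_succ, add_tsub_cancel_right]
  field_simp
  ring

lemma hasDerivAt_poissonCDF_succ (n : ℕ) (t : ℝ) :
    HasDerivAt (poissonCDF (n + 1)) (-poissonWeight t n) t := by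
  induction n with
  | zero =>
    have h : poissonCDF 1 = fun s => exp (-s) := funext fun s => by simp [poissonCDF, poissonWeight]
    rw [h]
    exact (hasDerivAt_neg t).exp.congr_deriv (by simp [poissonWeight])
  | succ n ih =>
    have h : poissonCDF (n + 2) = poissonCDF (n + 1) + (poissonWeight · (n + 1)) :=
      funext fun s => Finset.sum_range_succ (poissonWeight s) (n + 1)
    rw [h]
    exact (ih.add (hasDerivAt_poissonWeight_succ t n)).congr_deriv (by ring)

lemma antitoneOn_poissonCDF (n : ℕ) : AntitoneOn (poissonCDF n) (Ici 0) := by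
  cases n with
  | zero =>
    have h : poissonCDF 0 = fun _ => 0 := funext fun _ => Finset.sum_range_zero _
    rw [h]
    exact antitoneOn_const
  | succ n =>
    refine antitoneOn_of_hasDerivWithinAt_nonpos (convex_Ici 0)
      (fun t _ => (hasDerivAt_poissonCDF_succ n t).continuousAt.continuousWithinAt)
      (fun t _ => (hasDerivAt_poissonCDF_succ n t).hasDerivWithinAt) fun t ht => ?_
    rw [interior_Ici] at ht
    exact neg_nonpos.2 (poissonWeight_nonneg (le_of_lt ht) n)

lemma tendsto_poissonCDF_atTop (n : ℕ) : Tendsto (poissonCDF n) atTop (𝓝 0) := by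
  have h : ∀ k, Tendsto (poissonWeight · k) atTop (𝓝 0) := fun k => by
    simpa [poissonWeight, mul_comm, mul_div_assoc] using
      (tendsto_pow_mul_exp_neg_atTop_nhds_zero k).div_const (k.factorial : ℝ)
  have hsum := tendsto_finsetSum (Finset.range n) fun k (_ : k ∈ Finset.range n) => h k
  rw [Finset.sum_const_zero] at hsum
  exact hsum

end Poisson

lemma tsum_mul_sum_range_succ_eq_tsum_mul_tsum_nat_add {f g : ℕ → ℝ}
    (hf : 0 ≤ f) (hg : 0 ≤ g) (hfs : Summable f) (hgs : Summable g) :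
    ∑' k, f k * ∑ j ∈ Finset.range (k + 1), g j = ∑' j, g j * ∑' m, f (m + j) := by
  set F : ℕ → ℕ → ℝ := fun k j => if j ≤ k then f k * g j else 0
  have hF : Summable (Function.uncurry F) := by
    refine (hfs.mul_of_nonneg hgs hf hg).of_nonneg_of_le (fun p => ?_) (fun p => ?_) <;>
      by_cases h : p.2 ≤ p.1 <;> simp [F, Function.uncurry, h, mul_nonneg (hf p.1) (hg p.2)]
  have hrowSum (k : ℕ) : Summable (F k) := hF.prod_factor k
  have hcolSum (j : ℕ) : Summable (F · j) := hF.prod_symm.prod_factor j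
  have hrow (k : ℕ) : ∑' j, F k j = f k * ∑ j ∈ Finset.range (k + 1), g j := by
    rw [tsum_eq_sum (s := Finset.range (k + 1)) fun j hj => ?_, Finset.mul_sum]
    · exact Finset.sum_congr rfl fun j hj => if_pos (Nat.lt_succ_iff.1 (Finset.mem_range.1 hj))
    · exact if_neg (by simpa [Nat.lt_succ_iff] using hj)
  have hcol (j : ℕ) : ∑' k, F k j = g j * ∑' m, f (m + j) := by
    rw [← (hcolSum j).sum_add_tsum_nat_add j, ← tsum_mul_left]
    have hlow : ∑ k ∈ Finset.range j, F k j = 0 :=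
      Finset.sum_eq_zero fun k hk => if_neg (not_le.2 (Finset.mem_range.1 hk))
    simp [F, hlow, mul_comm]
  rw [← tsum_congr hrow, ← tsum_congr hcol, hF.tsum_comm' hrowSum hcolSum]

lemma exp_mul_besselI_zero (a x : ℝ) :
    exp (-(x ^ 2 + a ^ 2) / 2) * besselI 0 (a * x) =
      ∑' k, poissonWeight (a ^ 2 / 2) k * poissonWeight (x ^ 2 / 2) k := by
  rw [besselI, ← tsum_mul_left]
  refine tsum_congr fun k => ?_
  have hexp : exp (-(x ^ 2 + a ^ 2) / 2) = exp (-(a ^ 2 / 2)) * exp (-(x ^ 2 / 2)) := by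
    rw [← exp_add]; ring_nf
  have hpow : (a * x / 2) ^ (2 * k + 0) = (a ^ 2 / 2) ^ k * (x ^ 2 / 2) ^ k := by
    rw [add_zero, pow_mul, ← mul_pow]; ring
  rw [hexp, hpow, poissonWeight, poissonWeight, add_zero]
  field_simp

lemma hasDerivAt_neg_poissonCDF_sq_half (k : ℕ) (x : ℝ) :
    HasDerivAt (fun x => -poissonCDF (k + 1) (x ^ 2 / 2)) (x * poissonWeight (x ^ 2 / 2) k) x := by
  have hsq : HasDerivAt (fun x : ℝ => x ^ 2 / 2) x x := by
    simpa using (hasDerivAt_pow 2 x).div_const 2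
  exact ((hasDerivAt_poissonCDF_succ k _).comp x hsq).neg.congr_deriv (by ring)

lemma integral_Ioi_mul_poissonWeight_sq_half {b : ℝ} (hb : 0 ≤ b) (k : ℕ) :
    IntegrableOn (fun x => x * poissonWeight (x ^ 2 / 2) k) (Ioi b) ∧
      ∫ x in Ioi b, x * poissonWeight (x ^ 2 / 2) k = poissonCDF (k + 1) (b ^ 2 / 2) := by
  have hderiv (x : ℝ) (_ : x ∈ Ici b) := hasDerivAt_neg_poissonCDF_sq_half k x
  have hnonneg (x : ℝ) (hx : x ∈ Ioi b) : 0 ≤ x * poissonWeight (x ^ 2 / 2) k :=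
    mul_nonneg (hb.trans hx.le) (poissonWeight_nonneg (by positivity) k)
  have hlim : Tendsto (fun x : ℝ => -poissonCDF (k + 1) (x ^ 2 / 2)) atTop (𝓝 0) := by
    simpa using ((tendsto_poissonCDF_atTop (k + 1)).comp
      ((tendsto_pow_atTop two_ne_zero).atTop_div_const two_pos)).neg
  refine ⟨integrableOn_Ioi_deriv_of_nonneg' hderiv hnonneg hlim, ?_⟩
  rw [integral_Ioi_of_hasDerivAt_of_nonneg' hderiv hnonneg hlim, zero_sub, neg_neg]

lemma marcumQ1_eq_tsum_poissonWeight_mul_poissonCDF (a : ℝ) {b : ℝ} (hb : 0 ≤ b) :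
    marcumQ1 a b = ∑' k, poissonWeight (a ^ 2 / 2) k * poissonCDF (k + 1) (b ^ 2 / 2) := by
  have ha : 0 ≤ a ^ 2 / 2 := by positivity
  have hc : 0 ≤ b ^ 2 / 2 := by positivity
  set F : ℕ → ℝ → ℝ := fun k x =>
    poissonWeight (a ^ 2 / 2) k * (x * poissonWeight (x ^ 2 / 2) k)
  have hint (k : ℕ) : IntegrableOn (F k) (Ioi b) :=
    (integral_Ioi_mul_poissonWeight_sq_half hb k).1.const_mul _
  have hval (k : ℕ) :
      ∫ x in Ioi b, F k x = poissonWeight (a ^ 2 / 2) k * poissonCDF (k + 1) (b ^ 2 / 2) := by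
    rw [integral_const_mul, (integral_Ioi_mul_poissonWeight_sq_half hb k).2]
  have hnorm (k : ℕ) : ∫ x in Ioi b, ‖F k x‖ = ∫ x in Ioi b, F k x :=
    setIntegral_congr_fun measurableSet_Ioi fun x hx => norm_of_nonneg <|
      mul_nonneg (poissonWeight_nonneg ha k)
        (mul_nonneg (hb.trans (le_of_lt hx)) (poissonWeight_nonneg (by positivity) k))
  have hsum : Summable fun k => ∫ x in Ioi b, ‖F k x‖ := by
    simp only [hnorm, hval]
    refine (summable_poissonWeight (a ^ 2 / 2)).of_nonneg_of_le (fun k => ?_) fun k => ?_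
    · exact mul_nonneg (poissonWeight_nonneg ha k) (poissonCDF_nonneg hc _)
    · exact mul_le_of_le_one_right (poissonWeight_nonneg ha k) (poissonCDF_le_one hc _)
  calc marcumQ1 a b = ∫ x in Ioi b, ∑' k, F k x := by
        rw [marcumQ1, integral_Ici_eq_integral_Ioi]
        refine setIntegral_congr_fun measurableSet_Ioi fun x _ => ?_
        simp only [F, mul_left_comm _ x, tsum_mul_left, mul_assoc, exp_mul_besselI_zero]
    _ = ∑' k, ∫ x in Ioi b, F k x := (integral_tsum_of_summable_integral_norm hint hsum).symm
    _ = _ := tsum_congr hval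

lemma marcumQ1_eq_tsum_poissonWeight_mul_one_sub_poissonCDF (a : ℝ) {b : ℝ} (hb : 0 ≤ b) :
    marcumQ1 a b = ∑' j, poissonWeight (b ^ 2 / 2) j * (1 - poissonCDF j (a ^ 2 / 2)) := by
  rw [marcumQ1_eq_tsum_poissonWeight_mul_poissonCDF a hb]
  exact (tsum_mul_sum_range_succ_eq_tsum_mul_tsum_nat_add (poissonWeight_nonneg (by positivity))
    (poissonWeight_nonneg (by positivity)) (summable_poissonWeight _)
    (summable_poissonWeight _)).trans (tsum_congr fun j => by rw [tsum_poissonWeight_nat_add])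

lemma summable_poissonWeight_mul_one_sub_poissonCDF {s t : ℝ} (hs : 0 ≤ s) (ht : 0 ≤ t) :
    Summable fun j => poissonWeight s j * (1 - poissonCDF j t) :=
  (summable_poissonWeight s).of_nonneg_of_le
    (fun j => mul_nonneg (poissonWeight_nonneg hs j) (sub_nonneg.2 (poissonCDF_le_one ht j)))
    fun j => mul_le_of_le_one_right (poissonWeight_nonneg hs j)
      (sub_le_self _ (poissonCDF_nonneg ht j))

/-- For fixed `b > 0`, the Marcum Q-function `a ↦ Q₁(a,b)` is monotonically
non-decreasing in `a ≥ 0`. -/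
theorem marcumQ1_monotone_first_arg (b : ℝ) (hb : 0 < b) :
    MonotoneOn (fun a : ℝ => marcumQ1 a b) (Ici (0:ℝ)) := by
  intro a₁ ha₁ a₂ _ h
  have ht₁ : 0 ≤ a₁ ^ 2 / 2 := by positivity
  have ht₂ : 0 ≤ a₂ ^ 2 / 2 := by positivity
  have hc : 0 ≤ b ^ 2 / 2 := by positivity
  have hsq : a₁ ^ 2 / 2 ≤ a₂ ^ 2 / 2 := by gcongr
  simp only [marcumQ1_eq_tsum_poissonWeight_mul_one_sub_poissonCDF _ hb.le]
  refine Summable.tsum_le_tsum (fun j => ?_)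
    (summable_poissonWeight_mul_one_sub_poissonCDF hc ht₁)
    (summable_poissonWeight_mul_one_sub_poissonCDF hc ht₂)
  exact mul_le_mul_of_nonneg_left (sub_le_sub_left (antitoneOn_poissonCDF j ht₁ ht₂ hsq) 1)
    (poissonWeight_nonneg hc j)
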